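/- arXiv:0708.0138 — 2 statements merged into one kernel-verified Lean document; each statement's English description precedes it below -/
import Mathlib

section
/- Under the Malthusian hypotheses, for the cascade started from x = 1 there exists p > 1 such that E[(sup_{u∈𝒰} ξ_u^{p_0})^p] < ∞; in particular sup_{u∈𝒰} ξ_u^{p_0} belongs to L^p(P) and is finite almost surely. -/
open MeasureTheory ProbabilityTheory Filter Real
open scoped ENNReal NNReal Topology

/-- Representation space for finite point measures on `(0,∞)`: a point measure `s`
is identified with the sequence `(s 0, s 1, …)` of its atoms followed by zeros. -/
abbrev PMSeq : Type := ℕ → ℝ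

/-- `s` is a genuine representation of a finite point measure: all entries are
nonnegative and the nonzero entries (the atoms) are exactly those of index `< n`
for some `n`. -/
def IsPointSeq (s : PMSeq) : Prop :=
  (∀ i, 0 ≤ s i) ∧ ∃ n : ℕ, ∀ i, s i ≠ 0 ↔ i < n

/-- The number `#s` of atoms of `s`. -/
noncomputable def numAtoms (s : PMSeq) : ℕ := Nat.card {i : ℕ // s i ≠ 0}

/-- `⟨x^p, s⟩ = ∑_{i=1}^{#s} s_i ^ p`, valued in `[0,∞]`. -/
noncomputable def powSum (p : ℝ) (s : PMSeq) : ℝ≥0∞ :=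
  ∑' i : ℕ, if s i = 0 then 0 else ENNReal.ofReal (s i ^ p)

/-- `Λ(p) = ∫ ⟨x^p, s⟩ ν(ds) ∈ [0,∞]`. -/
noncomputable def Lam (ν : Measure PMSeq) (p : ℝ) : ℝ≥0∞ := ∫⁻ s, powSum p s ∂ν

/-- `κ(p) = 1 - Λ(p)` (junk value when `Λ(p) = ∞`). -/
noncomputable def kappa (ν : Measure PMSeq) (p : ℝ) : ℝ := 1 - (Lam ν p).toReal

/-- `p̲ = inf {p : Λ(p) < ∞}`, as an extended real. -/
noncomputable def pLow (ν : Measure PMSeq) : EReal :=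
  sInf {x : EReal | ∃ p : ℝ, x = ↑p ∧ Lam ν p < ⊤}

/-- `p_∞ = inf {p > p̲ : Λ(p) = ∞}`, as an extended real (`⊤` if no such `p`). -/
noncomputable def pInfty (ν : Measure PMSeq) : EReal :=
  sInf {x : EReal | ∃ p : ℝ, x = ↑p ∧ pLow ν < ↑p ∧ Lam ν p = ⊤}

/-- `p ∈ (p̲, p_∞)`. -/
def InDomain (ν : Measure PMSeq) (p : ℝ) : Prop := pLow ν < ↑p ∧ ↑p < pInfty ν

/-- `p₀` is the Malthusian exponent: the smallest solution of `κ(p) = 0`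
(equivalently `Λ(p) = 1`) on `(p̲, p_∞)`. -/
def IsMalthusian (ν : Measure PMSeq) (p₀ : ℝ) : Prop :=
  InDomain ν p₀ ∧ Lam ν p₀ = 1 ∧ ∀ q : ℝ, InDomain ν q → Lam ν q = 1 → p₀ ≤ q

/-- The Malthusian hypotheses: the Malthusian exponent `p₀` exists, is positive,
`κ(p) > 0` for some `p > p₀`, and `∫ ⟨x^{p₀}, s⟩^p ν(ds) < ∞` for some `p > 1`. -/
def MalthusHyp (ν : Measure PMSeq) (p₀ : ℝ) : Prop :=
  IsMalthusian ν p₀ ∧ 0 < p₀ ∧ (∃ p : ℝ, p₀ < p ∧ InDomain ν p ∧ Lam ν p < 1) ∧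
    ∃ p : ℝ, 1 < p ∧ ∫⁻ s, powSum p₀ s ^ p ∂ν < ⊤
variable {Ω : Type*}

/-- The multiplicative cascade built from the i.i.d. marks `R`: `ξ_∅ = x` and
`ξ_{ui} = R_u(i) · ξ_u`; explicitly `ξ_u = x ∏_{k<|u|} R_{u|k}(u_k)`. -/
noncomputable def xi (R : List ℕ → Ω → ℕ → ℝ) (x : ℝ) (u : List ℕ) (ω : Ω) : ℝ :=
  x * ∏ k ∈ Finset.range u.length, R (u.take k) ω (u.getD k 0)

/-- `M_n^{(p)} = ∑_{|u|=n} ξ_u^p` (summing over individuals of positive size). -/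
noncomputable def genSum (R : List ℕ → Ω → ℕ → ℝ) (x p : ℝ) (n : ℕ) (ω : Ω) : ℝ :=
  ∑' u : {u : List ℕ // u.length = n}, if xi R x u ω = 0 then 0 else xi R x u ω ^ p

/-- The filtration `H_n = σ(R_v : |v| < n)`. -/
noncomputable def cascadeFilt [m0 : MeasurableSpace Ω] (R : List ℕ → Ω → ℕ → ℝ)
    (hR : ∀ u, Measurable (R u)) : Filtration ℕ m0 where
  seq n := ⨆ (v : List ℕ) (_ : v.length < n), MeasurableSpace.comap (R v) inferInstance
  mono' m n hmn := by
    refine iSup₂_le fun v hv => ?_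
    exact le_iSup₂ (f := fun (v : List ℕ) (_ : v.length < n) =>
      MeasurableSpace.comap (R v) inferInstance) v (hv.trans_le hmn)
  le' n := iSup₂_le fun v _ => measurable_iff_comap_le.mp (hR v)

/-! Pick `q > p₀` with `Λ(q) < 1` and put `p = q / p₀`. Then `(sup_u ξ_u^{p₀})^p ≤ ∑_u ξ_u^q`.
The marks along an ancestral line are independent, so `E ξ_u^q` is the product of the
one-generation means `∫ s_i^q ν(ds)` over the ancestors of `u`; summing over the `n`-th
generation gives `Λ(q)^n`, and the whole tree contributes `∑_n Λ(q)^n = (1 - Λ(q))⁻¹ < ∞`. -/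

open Finset

namespace ENNReal

variable {ι : Type*}

lemma tsum_fin_pi_prod (f : ι → ℝ≥0∞) : ∀ n : ℕ,
    ∑' v : Fin n → ι, ∏ k, f (v k) = (∑' i, f i) ^ n
  | 0 => by simp
  | n + 1 => by
    rw [← (Fin.consEquiv fun _ => ι).tsum_eq, ENNReal.tsum_prod', pow_succ',
      ← tsum_fin_pi_prod f n, ← ENNReal.tsum_mul_right]
    refine tsum_congr fun i => ?_
    rw [← ENNReal.tsum_mul_left]
    exact tsum_congr fun v => by simp [Fin.prod_univ_succ]

lemma tsum_list_prod_map (f : ι → ℝ≥0∞) :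
    ∑' u : List ι, (u.map f).prod = ∑' n : ℕ, (∑' i, f i) ^ n := by
  rw [← List.equivSigmaTuple.symm.tsum_eq, ENNReal.tsum_sigma']
  refine tsum_congr fun n => ?_
  rw [← tsum_fin_pi_prod]
  exact tsum_congr fun v => by simp [List.equivSigmaTuple, List.map_ofFn, List.prod_ofFn]

lemma iSup_ofReal_rpow_rpow_le_tsum {a : ι → ℝ} (ha : ∀ i, 0 ≤ a i) (r : ℝ) {p : ℝ}
    (hp : 0 < p) : (⨆ i, ENNReal.ofReal (a i ^ r)) ^ p ≤ ∑' i, ENNReal.ofReal (a i ^ (r * p)) := by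
  rw [← le_rpow_inv_iff hp]
  refine iSup_le fun i => (le_rpow_inv_iff hp).2 ?_
  rw [ofReal_rpow_of_nonneg (Real.rpow_nonneg (ha i) r) hp.le, ← Real.rpow_mul (ha i)]
  exact ENNReal.le_tsum i

end ENNReal

lemma Finset.prod_range_length_getD {M : Type*} [CommMonoid M] {α : Type*} (f : α → M) (d : α)
    (u : List α) : ∏ k ∈ range u.length, f (u.getD k d) = (u.map f).prod := by
  rw [← Fin.prod_univ_eq_prod_range (fun k => f (u.getD k d)), ← List.prod_ofFn]
  congr 1
  refine List.ext_getElem (by simp) fun _ _ _ => ?_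
  simp

lemma Lam_eq_tsum_lintegral (ν : Measure PMSeq) {q : ℝ} (hq : q ≠ 0) :
    Lam ν q = ∑' i, ∫⁻ s, ENNReal.ofReal (s i ^ q) ∂ν := by
  have hpowSum : ∀ s, powSum q s = ∑' i, ENNReal.ofReal (s i ^ q) := fun s =>
    tsum_congr fun i => by split_ifs with h <;> simp [h, Real.zero_rpow hq]
  simp_rw [Lam, hpowSum]
  exact lintegral_tsum fun i =>
    ((measurable_pi_apply i).pow_const q).ennreal_ofReal.aemeasurable

lemma xi_nonneg {R : List ℕ → Ω → ℕ → ℝ} {x : ℝ} (hx : 0 ≤ x) {ω : Ω} (hR : ∀ v i, 0 ≤ R v ω i)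
    (u : List ℕ) : 0 ≤ xi R x u ω :=
  mul_nonneg hx <| Finset.prod_nonneg fun _ _ => hR _ _

section Cascade

variable [MeasurableSpace Ω] {P : Measure Ω} {ν : Measure PMSeq} {R : List ℕ → Ω → ℕ → ℝ}

lemma measurable_xi (hR : ∀ u, Measurable (R u)) (x : ℝ) (u : List ℕ) :
    Measurable (xi R x u) :=
  measurable_const.mul <| Finset.measurable_prod _ fun _ _ =>
    (measurable_pi_apply _).comp (hR _)

lemma ae_forall_marks_nonneg (hν : ∀ᵐ s ∂ν, ∀ i, 0 ≤ s i) (hR : ∀ u, Measurable (R u))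
    (hdist : ∀ u, P.map (R u) = ν) : ∀ᵐ ω ∂P, ∀ v i, 0 ≤ R v ω i := by
  refine ae_all_iff.2 fun v => ?_
  rw [← hdist v] at hν
  exact ae_of_ae_map (hR v).aemeasurable hν

lemma lintegral_ofReal_xi_one_rpow (hR : ∀ u, Measurable (R u)) (hindep : iIndepFun R P)
    (hdist : ∀ u, P.map (R u) = ν) (hnonneg : ∀ᵐ ω ∂P, ∀ v i, 0 ≤ R v ω i) (q : ℝ)
    (u : List ℕ) :
    ∫⁻ ω, ENNReal.ofReal (xi R 1 u ω ^ q) ∂P =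
      (u.map fun i => ∫⁻ s, ENNReal.ofReal (s i ^ q) ∂ν).prod := by
  set F : List ℕ → Ω → ℝ≥0∞ := fun v ω => ENNReal.ofReal (R v ω (u.getD v.length 0) ^ q)
  have hF : ∀ v, Measurable (F v) := fun v => by fun_prop
  have hlen : ∀ k ∈ range u.length, (u.take k).length = k := fun k hk =>
    List.length_take_of_le (mem_range.1 hk).le
  -- Distinct ancestors carry distinct, hence independent, marks.
  have htake_inj : Set.InjOn u.take (range u.length) := fun a ha b hb hab => by
    simpa [hlen a ha, hlen b hb] using congrArg List.length hab
  have hprod : ∀ᵐ ω ∂P, ENNReal.ofReal (xi R 1 u ω ^ q) =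
      ∏ v ∈ (range u.length).image u.take, F v ω := by
    filter_upwards [hnonneg] with ω hω
    rw [prod_image htake_inj, xi, one_mul, ← Real.finsetProd_rpow _ _ fun _ _ => hω _ _,
      ENNReal.ofReal_prod_of_nonneg fun _ _ => Real.rpow_nonneg (hω _ _) q]
    exact prod_congr rfl fun k hk => by simp only [F, hlen k hk]
  have hF_indep : iIndepFun F P :=
    hindep.comp (fun v y => ENNReal.ofReal (y (u.getD v.length 0) ^ q)) fun _ => by fun_prop
  rw [lintegral_congr_ae hprod, lintegral_prod_eq_prod_lintegral_of_indepFun _ F hF_indep hF,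
    prod_image htake_inj, ← prod_range_length_getD _ 0]
  refine prod_congr rfl fun k hk => ?_
  simp only [F, hlen k hk]
  rw [← hdist (u.take k), lintegral_map (by fun_prop) (hR _)]

lemma lintegral_tsum_ofReal_xi_one_rpow (hR : ∀ u, Measurable (R u)) (hindep : iIndepFun R P)
    (hdist : ∀ u, P.map (R u) = ν) (hnonneg : ∀ᵐ ω ∂P, ∀ v i, 0 ≤ R v ω i) {q : ℝ}
    (hq : q ≠ 0) :
    ∫⁻ ω, ∑' u, ENNReal.ofReal (xi R 1 u ω ^ q) ∂P = ∑' n : ℕ, Lam ν q ^ n := by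
  rw [lintegral_tsum fun u => ((measurable_xi hR 1 u).pow_const q).ennreal_ofReal.aemeasurable,
    Lam_eq_tsum_lintegral ν hq, ← ENNReal.tsum_list_prod_map]
  exact tsum_congr (lintegral_ofReal_xi_one_rpow hR hindep hdist hnonneg q)

end Cascade

theorem stmt9_general {Ω : Type*} [MeasurableSpace Ω] (P : Measure Ω)
    (ν : Measure PMSeq) (hν : ∀ᵐ s ∂ν, IsPointSeq s)
    (R : List ℕ → Ω → ℕ → ℝ) (hRmeas : ∀ u, Measurable (R u))
    (hRindep : iIndepFun R P)
    (hRdist : ∀ u, Measure.map (R u) P = ν)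
    (p₀ : ℝ) (hmal : MalthusHyp ν p₀) :
    ∃ p : ℝ, 1 < p ∧
      ∫⁻ ω, (⨆ u : List ℕ, ENNReal.ofReal (xi R 1 u ω ^ p₀)) ^ p ∂P < ⊤ ∧
      ∀ᵐ ω ∂P, (⨆ u : List ℕ, ENNReal.ofReal (xi R 1 u ω ^ p₀)) < ⊤ := by
  obtain ⟨-, hp₀, ⟨q, hp₀q, -, hΛq⟩, -⟩ := hmal
  have hp : 1 < q / p₀ := (one_lt_div hp₀).2 hp₀q
  have hnonneg := ae_forall_marks_nonneg (hν.mono fun s hs => hs.1) hRmeas hRdist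
  have hsup_le : ∀ᵐ ω ∂P, (⨆ u, ENNReal.ofReal (xi R 1 u ω ^ p₀)) ^ (q / p₀) ≤
      ∑' u, ENNReal.ofReal (xi R 1 u ω ^ q) := hnonneg.mono fun ω hω => by
    simpa [mul_div_cancel₀ q hp₀.ne'] using
      ENNReal.iSup_ofReal_rpow_rpow_le_tsum (xi_nonneg zero_le_one hω) p₀ (zero_lt_one.trans hp)
  have hgeom : ∑' n : ℕ, Lam ν q ^ n < ⊤ := by
    rw [ENNReal.tsum_geometric]
    exact ENNReal.inv_lt_top.2 (tsub_pos_of_lt hΛq)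
  have hint : ∫⁻ ω, (⨆ u, ENNReal.ofReal (xi R 1 u ω ^ p₀)) ^ (q / p₀) ∂P < ⊤ :=
    (lintegral_mono_ae hsup_le).trans_lt <| by
      rwa [lintegral_tsum_ofReal_xi_one_rpow hRmeas hRindep hRdist hnonneg (hp₀.trans hp₀q).ne']
  refine ⟨q / p₀, hp, hint, ?_⟩
  have hmeas : Measurable fun ω => (⨆ u, ENNReal.ofReal (xi R 1 u ω ^ p₀)) ^ (q / p₀) :=
    (Measurable.iSup fun u =>
      ((measurable_xi hRmeas 1 u).pow_const p₀).ennreal_ofReal).pow_const _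
  filter_upwards [ae_lt_top hmeas hint.ne] with ω hω
  exact (ENNReal.rpow_lt_top_iff_of_pos (zero_lt_one.trans hp)).1 hω

/-- Under the Malthusian hypotheses, for the cascade started
from `1`, there is `p > 1` with `E[(sup_u ξ_u^{p₀})^p] < ∞`; in particular
`sup_u ξ_u^{p₀}` is in `L^p(P)` and is finite almost surely. -/
theorem stmt9 {Ω : Type*} [MeasurableSpace Ω] (P : Measure Ω) [IsProbabilityMeasure P]
    (ν : Measure PMSeq) [IsProbabilityMeasure ν] (hν : ∀ᵐ s ∂ν, IsPointSeq s)
    (R : List ℕ → Ω → ℕ → ℝ) (hRmeas : ∀ u, Measurable (R u))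
    (hRindep : iIndepFun R P)
    (hRdist : ∀ u, Measure.map (R u) P = ν)
    (p₀ : ℝ) (hmal : MalthusHyp ν p₀) :
    ∃ p : ℝ, 1 < p ∧
      ∫⁻ ω, (⨆ u : List ℕ, ENNReal.ofReal (xi R 1 u ω ^ p₀)) ^ p ∂P < ⊤ ∧
      ∀ᵐ ω ∂P, (⨆ u : List ℕ, ENNReal.ofReal (xi R 1 u ω ^ p₀)) < ⊤ :=
  stmt9_general P ν hν R hRmeas hRindep hRdist p₀ hmal
end

section
/- (Spine random walk / many-to-one formula.) Assume the Malthusian exponent p_0 exists. Define the measure ν̃ on ℝ by ∫ k(y) ν̃(dy) = ∫_ℛ ⟨x^{p_0} k(ln x), s⟩ ν(ds) for every measurable k : ℝ → [0,∞). Then ν̃ is a probability measure, and for the cascade started from x = 1, for every n ≥ 1 and every measurable f : ℝ^n → [0,∞): E[ ∑_{|u|=n, ξ_u > 0} ξ_u^{p_0} f(ln ξ_{u|1} − ln ξ_{u|0}, …, ln ξ_{u|n} − ln ξ_{u|n−1}) ] = ∫_{ℝ^n} f(y_1, …, y_n) ν̃(dy_1)⋯ν̃(dy_n), where u|m denotes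 the prefix of u of length m. (Equivalently: under the tagged-leaf measure P*, S_n = ln χ_n is a random walk with i.i.d. steps of law ν̃.) -/
/-! Along a word `u` of length `n`, `ξ_u = ∏_{k<n} R_{u|k}(u_k)`, and the prefixes `u|0, …, u|n-1`
are distinct, so the marks `(R_{u|k})_{k<n}` met along `u` are i.i.d. with law `ν`. On
`{ξ_u > 0}` the summand is `∏_k R_{u|k}(u_k)^{p₀} · f(ln R_{u|0}(u_0), …, ln R_{u|n-1}(u_{n-1}))`,
a function of the index vector `(u_k)_k ∈ ℕⁿ` and of these marks. Hence the left side equals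
`∑_{I ∈ ℕⁿ} ∫ ∏_k s_k(I_k)^{p₀} f(ln s_0(I_0), …) ν^{⊗n}(ds)`, and since `ν̃` is the sum over `i`
of the images of `s_i^{p₀} ν(ds)` under `s ↦ ln s_i`, the same expansion of `ν̃^{⊗n}`
(checked on rectangles) gives the right side. The total mass of `ν̃` is `Λ(p₀) = 1`. -/

open MeasureTheory ProbabilityTheory Filter Real
open scoped ENNReal NNReal Topology

variable {Ω : Type*}

/-- The tilted step measure `ν̃` on `ℝ`, defined by
`∫ k(y) ν̃(dy) = ∫ ⟨x^{p₀} k(ln x), s⟩ ν(ds)`: it is the sum over coordinates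
`i` of the image under `s ↦ ln s_i` of `ν` weighted by the density `s_i^{p₀}`
(restricted to nonzero atoms). -/
noncomputable def nuTilde (ν : Measure PMSeq) (p₀ : ℝ) : Measure ℝ :=
  Measure.sum fun i : ℕ =>
    Measure.map (fun s => Real.log (s i))
      (ν.withDensity fun s => if s i = 0 then 0 else ENNReal.ofReal (s i ^ p₀))


theorem ENNReal.prod_univ_tsum {β : Type*} :
    ∀ {n : ℕ} (c : Fin n → β → ℝ≥0∞), ∏ k, ∑' b, c k b = ∑' I : Fin n → β, ∏ k, c k (I k)
  | 0, c => by simp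
  | n + 1, c => by
    rw [Fin.prod_univ_succ, ENNReal.prod_univ_tsum fun k => c k.succ,
      ← (Fin.consEquiv fun _ : Fin (n + 1) => β).tsum_eq, ENNReal.tsum_prod',
      ← ENNReal.tsum_mul_right]
    refine tsum_congr fun b => ?_
    rw [← ENNReal.tsum_mul_left]
    refine tsum_congr fun I => ?_
    simp [Fin.consEquiv, Fin.prod_univ_succ]

theorem MeasureTheory.lintegral_pi_prod {ι : Type*} [Fintype ι] {α : ι → Type*}
    [∀ k, MeasurableSpace (α k)] (μ : ∀ k, Measure (α k)) [∀ k, IsProbabilityMeasure (μ k)]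
    {h : ∀ k, α k → ℝ≥0∞} (hh : ∀ k, Measurable (h k)) :
    ∫⁻ x, ∏ k, h k (x k) ∂Measure.pi μ = ∏ k, ∫⁻ a, h k a ∂μ k := by
  refine (lintegral_prod_eq_prod_lintegral_of_indepFun Finset.univ
    (fun k (x : ∀ k, α k) => h k (x k)) (iIndepFun_pi fun k => (hh k).aemeasurable)
    fun k => (hh k).comp (measurable_pi_apply k)).trans ?_
  exact Finset.prod_congr rfl fun k _ => (measurePreserving_eval μ k).lintegral_comp (hh k)

theorem ProbabilityTheory.iIndepFun.map_precomp_eq_pi {Ω ι κ β : Type*} [MeasurableSpace Ω]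
    [MeasurableSpace β] [Fintype κ] {P : Measure Ω} {X : ι → Ω → β} {ν : Measure β}
    (hX : iIndepFun X P) (hmeas : ∀ i, Measurable (X i)) (hlaw : ∀ i, P.map (X i) = ν)
    {g : κ → ι} (hg : Function.Injective g) :
    P.map (fun ω k => X (g k) ω) = Measure.pi fun _ => ν := by
  rw [(hX.precomp hg).map_fun_eq_pi_map fun k => (hmeas _).aemeasurable]
  simp only [hlaw]

section SumMapWithDensity

variable {α β ι : Type*} [MeasurableSpace α] [MeasurableSpace β] {ν : Measure α}
  {w : ι → α → ℝ≥0∞} {φ : ι → α → β}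

theorem lintegral_sum_map_withDensity (hw : ∀ i, Measurable (w i)) (hφ : ∀ i, Measurable (φ i))
    {g : β → ℝ≥0∞} (hg : Measurable g) :
    ∫⁻ y, g y ∂Measure.sum (fun i => (ν.withDensity (w i)).map (φ i)) =
      ∑' i, ∫⁻ a, w i a * g (φ i a) ∂ν := by
  rw [lintegral_sum_measure]
  refine tsum_congr fun i => ?_
  rw [lintegral_map hg (hφ i), lintegral_withDensity_eq_lintegral_mul _ (hw i)
    (show Measurable fun a => g (φ i a) from hg.comp (hφ i))]
  rfl

theorem lintegral_pi_sum_map_withDensity [IsProbabilityMeasure ν] {μ : Measure β} [SigmaFinite μ]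
    (hμ : μ = Measure.sum fun i => (ν.withDensity (w i)).map (φ i))
    (hw : ∀ i, Measurable (w i)) (hφ : ∀ i, Measurable (φ i)) {n : ℕ} {f : (Fin n → β) → ℝ≥0∞}
    (hf : Measurable f) :
    ∫⁻ y, f y ∂Measure.pi (fun _ : Fin n => μ) =
      ∑' I : Fin n → ι, ∫⁻ σ, (∏ k, w (I k) (σ k)) * f (fun k => φ (I k) (σ k))
        ∂Measure.pi fun _ => ν := by
  classical
  have hW : ∀ I : Fin n → ι, Measurable fun σ : Fin n → α => ∏ k, w (I k) (σ k) :=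
    fun I => by fun_prop
  have hΦ : ∀ I : Fin n → ι, Measurable fun (σ : Fin n → α) k => φ (I k) (σ k) :=
    fun I => by fun_prop
  have hpi : Measure.pi (fun _ : Fin n => μ) = Measure.sum fun I : Fin n → ι =>
      ((Measure.pi fun _ => ν).withDensity fun σ => ∏ k, w (I k) (σ k)).map
        fun σ k => φ (I k) (σ k) := by
    refine Measure.pi_eq fun A hA => ?_
    have hind : ∀ k, Measurable ((A k).indicator (1 : β → ℝ≥0∞)) :=
      fun k => measurable_one.indicator (hA k)
    rw [← lintegral_indicator_one (MeasurableSet.univ_pi hA),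
      lintegral_sum_map_withDensity hW hΦ (measurable_one.indicator (MeasurableSet.univ_pi hA))]
    have hrect : ∀ (I : Fin n → ι) (σ : Fin n → α),
        (∏ k, w (I k) (σ k)) * (Set.univ.pi A).indicator 1 (fun k => φ (I k) (σ k)) =
          ∏ k, w (I k) (σ k) * (A k).indicator 1 (φ (I k) (σ k)) := by
      intro I σ
      simp only [Set.indicator_apply, Set.mem_univ_pi, Pi.one_apply, Finset.prod_mul_distrib,
        Fintype.prod_ite_zero, Finset.prod_const_one]
    simp_rw [hrect]
    refine (tsum_congr fun (I : Fin n → ι) => lintegral_pi_prod (fun _ => ν)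
      (h := fun k a => w (I k) a * (A k).indicator 1 (φ (I k) a))
      fun k => (hw (I k)).mul ((hind k).comp (hφ (I k)))).trans ?_
    rw [← ENNReal.prod_univ_tsum fun k i => ∫⁻ a, w i a * (A k).indicator 1 (φ i a) ∂ν]
    refine Finset.prod_congr rfl fun k _ => ?_
    rw [← lintegral_indicator_one (hA k), hμ, lintegral_sum_map_withDensity hw hφ (hind k)]
  rw [hpi]
  exact lintegral_sum_map_withDensity hW hΦ hf

end SumMapWithDensity

noncomputable def atomWeight (p : ℝ) (i : ℕ) (s : PMSeq) : ℝ≥0∞ :=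
  if s i = 0 then 0 else ENNReal.ofReal (s i ^ p)

@[fun_prop]
theorem measurable_atomWeight (p : ℝ) (i : ℕ) : Measurable (atomWeight p i) :=
  Measurable.ite (measurableSet_eq_fun (measurable_pi_apply i) measurable_const) measurable_const
    (ENNReal.measurable_ofReal.comp ((measurable_pi_apply i).pow_const p))

theorem measurable_log_apply (i : ℕ) : Measurable fun s : PMSeq => Real.log (s i) :=
  Real.measurable_log.comp (measurable_pi_apply i)

theorem nuTilde_eq_sum (ν : Measure PMSeq) (p : ℝ) :
    nuTilde ν p =
      Measure.sum fun i => (ν.withDensity (atomWeight p i)).map fun s => Real.log (s i) :=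
  rfl

theorem isProbabilityMeasure_nuTilde {ν : Measure PMSeq} {p : ℝ} (h : Lam ν p = 1) :
    IsProbabilityMeasure (nuTilde ν p) := by
  constructor
  rw [← lintegral_one, nuTilde_eq_sum, lintegral_sum_map_withDensity (measurable_atomWeight p)
    measurable_log_apply measurable_const]
  simp only [mul_one]
  rw [← lintegral_tsum fun i => (measurable_atomWeight p i).aemeasurable]
  exact h

theorem lintegral_pi_nuTilde {ν : Measure PMSeq} [IsProbabilityMeasure ν] {p : ℝ}
    [SigmaFinite (nuTilde ν p)] {n : ℕ} {f : (Fin n → ℝ) → ℝ≥0∞} (hf : Measurable f) :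
    ∫⁻ y, f y ∂Measure.pi (fun _ : Fin n => nuTilde ν p) =
      ∑' I : Fin n → ℕ, ∫⁻ σ, (∏ k, atomWeight p (I k) (σ k)) *
        f (fun k => Real.log (σ k (I k))) ∂Measure.pi fun _ => ν :=
  lintegral_pi_sum_map_withDensity (nuTilde_eq_sum ν p) (measurable_atomWeight p)
    measurable_log_apply hf

section Cascade

open Finset

theorem ite_pos_prod_range_eq_prod_ite {x : ℕ → ℝ} (hx : ∀ k, 0 ≤ x k) (p : ℝ) {n : ℕ}
    (g : (Fin n → ℝ) → ℝ≥0∞) :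
    (if 0 < ∏ k ∈ range n, x k then
        ENNReal.ofReal ((∏ k ∈ range n, x k) ^ p) *
          g (fun m : Fin n =>
            Real.log (∏ k ∈ range ((m : ℕ) + 1), x k) - Real.log (∏ k ∈ range m, x k))
      else 0) =
      (∏ k : Fin n, if x k = 0 then 0 else ENNReal.ofReal (x k ^ p)) *
        g (fun m : Fin n => Real.log (x m)) := by
  by_cases h0 : ∀ k < n, x k ≠ 0
  · have hpos : 0 < ∏ k ∈ range n, x k :=
      prod_pos fun k hk => (hx k).lt_of_ne' (h0 k (mem_range.1 hk))
    have hincr : (fun m : Fin n => Real.log (∏ k ∈ range ((m : ℕ) + 1), x k) -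
        Real.log (∏ k ∈ range m, x k)) = fun m : Fin n => Real.log (x m) := by
      funext m
      have hm : ∏ k ∈ range m, x k ≠ 0 :=
        prod_ne_zero_iff.2 fun k hk => h0 k ((mem_range.1 hk).trans m.2)
      rw [prod_range_succ, Real.log_mul hm (h0 m m.2), add_sub_cancel_left]
    rw [if_pos hpos, hincr, ← Real.finsetProd_rpow _ _ fun k _ => hx k,
      ENNReal.ofReal_prod_of_nonneg fun k _ => Real.rpow_nonneg (hx k) p,
      ← Fin.prod_univ_eq_prod_range (fun k => ENNReal.ofReal (x k ^ p))]
    congr 1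
    exact prod_congr rfl fun k _ => (if_neg (h0 k k.2)).symm
  · push Not at h0
    obtain ⟨k, hk, hk0⟩ := h0
    have hzero : ∏ k ∈ range n, x k = 0 := prod_eq_zero (mem_range.2 hk) hk0
    have hweight : (∏ k : Fin n, if x k = 0 then 0 else ENNReal.ofReal (x k ^ p)) = 0 :=
      prod_eq_zero (mem_univ ⟨k, hk⟩) (if_pos hk0)
    rw [if_neg (by rw [hzero]; exact lt_irrefl 0), hweight, zero_mul]

theorem List.getD_take {α : Type*} (l : List α) (d : α) {k m : ℕ} (h : m < k) :
    (l.take k).getD m d = l.getD m d := by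
  simp [List.getD_eq_getElem?_getD, h]

theorem xi_one_take (R : List ℕ → Ω → ℕ → ℝ) (ω : Ω) (u : List ℕ) {j : ℕ} (hj : j ≤ u.length) :
    xi R 1 (u.take j) ω = ∏ k ∈ range j, R (u.take k) ω (u.getD k 0) := by
  rw [xi, one_mul, List.length_take, min_eq_left hj]
  refine prod_congr rfl fun k hk => ?_
  rw [List.take_take, min_eq_left (mem_range.1 hk).le, List.getD_take u 0 (mem_range.1 hk)]

theorem cascade_summand_eq {R : List ℕ → Ω → ℕ → ℝ} {ω : Ω} (hR : ∀ v i, 0 ≤ R v ω i) (p : ℝ)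
    {n : ℕ} {u : List ℕ} (hu : u.length = n) (f : (Fin n → ℝ) → ℝ≥0∞) :
    (if 0 < xi R 1 u ω then
        ENNReal.ofReal (xi R 1 u ω ^ p) *
          f (fun m => Real.log (xi R 1 (u.take ((m : ℕ) + 1)) ω) -
            Real.log (xi R 1 (u.take (m : ℕ)) ω))
      else 0) =
      (∏ k : Fin n, atomWeight p (u.getD k 0) (R (u.take k) ω)) *
        f (fun k => Real.log (R (u.take k) ω (u.getD k 0))) := by
  subst hu
  have hincr : (fun m : Fin u.length => Real.log (xi R 1 (u.take ((m : ℕ) + 1)) ω) -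
      Real.log (xi R 1 (u.take (m : ℕ)) ω)) = fun m : Fin u.length =>
        Real.log (∏ k ∈ range ((m : ℕ) + 1), R (u.take k) ω (u.getD k 0)) -
          Real.log (∏ k ∈ range m, R (u.take k) ω (u.getD k 0)) :=
    funext fun m => by rw [xi_one_take R ω u m.2, xi_one_take R ω u m.2.le]
  have hxi : xi R 1 u ω = ∏ k ∈ range u.length, R (u.take k) ω (u.getD k 0) := by
    simpa using xi_one_take R ω u le_rfl
  rw [hincr, hxi]
  exact ite_pos_prod_range_eq_prod_ite (fun k => hR _ _) p f

theorem List.injective_take_fin {α : Type*} {u : List α} {n : ℕ} (hn : n ≤ u.length) :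
    Function.Injective fun k : Fin n => u.take k := fun a b hab => by
  have := congrArg List.length hab
  simp only [List.length_take, min_eq_left (a.2.le.trans hn), min_eq_left (b.2.le.trans hn)] at this
  exact Fin.ext this

theorem tsum_length_eq_tsum_fin {α : Type*} (d : α) {n : ℕ} (F : (Fin n → α) → ℝ≥0∞) :
    ∑' u : {u : List α // u.length = n}, F (fun k => u.1.getD k d) = ∑' I, F I := by
  refine Eq.trans ?_ ((Equiv.vectorEquivFin α n).tsum_eq F)
  refine tsum_congr fun u => congrArg F (funext fun k => ?_)
  have hk : (k : ℕ) < u.1.length := by rw [u.2]; exact k.2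
  simp [Equiv.vectorEquivFin, List.Vector.get, List.getElem?_eq_getElem hk]

theorem lintegral_tsum_word_marks {β : Type*} [MeasurableSpace Ω] [MeasurableSpace β]
    {P : Measure Ω} {ν : Measure β} [IsProbabilityMeasure ν] {R : List ℕ → Ω → β}
    (hRmeas : ∀ u, Measurable (R u)) (hRindep : iIndepFun R P) (hRdist : ∀ u, P.map (R u) = ν)
    {n : ℕ} {G : (Fin n → ℕ) → (Fin n → β) → ℝ≥0∞} (hG : ∀ I, Measurable (G I)) :
    ∫⁻ ω, ∑' u : {u : List ℕ // u.length = n},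
        G (fun k => u.1.getD k 0) (fun k => R (u.1.take k) ω) ∂P =
      ∑' I, ∫⁻ σ, G I σ ∂Measure.pi fun _ => ν := by
  have hmarks : ∀ v : Fin n → List ℕ, Measurable fun ω k => R (v k) ω :=
    fun v => measurable_pi_lambda _ fun k => hRmeas (v k)
  rw [lintegral_tsum (f := fun (u : {u : List ℕ // u.length = n}) ω =>
      G (fun k => u.1.getD k 0) fun k => R (u.1.take k) ω)
      fun u => ((hG _).comp (hmarks _)).aemeasurable,
    ← tsum_length_eq_tsum_fin 0 fun I => ∫⁻ σ, G I σ ∂Measure.pi fun _ => ν]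
  refine tsum_congr fun u => ?_
  rw [← hRindep.map_precomp_eq_pi hRmeas hRdist (List.injective_take_fin u.2.ge),
    lintegral_map (hG _) (hmarks _)]

end Cascade

theorem stmt11_general {Ω : Type*} [MeasurableSpace Ω] (P : Measure Ω)
    (ν : Measure PMSeq) [IsProbabilityMeasure ν] (hν : ∀ᵐ s ∂ν, IsPointSeq s)
    (R : List ℕ → Ω → ℕ → ℝ) (hRmeas : ∀ u, Measurable (R u))
    (hRindep : iIndepFun R P)
    (hRdist : ∀ u, Measure.map (R u) P = ν)
    (p₀ : ℝ) (hmal : IsMalthusian ν p₀) :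
    IsProbabilityMeasure (nuTilde ν p₀) ∧
    ∀ (n : ℕ), 1 ≤ n → ∀ f : (Fin n → ℝ) → ℝ≥0∞, Measurable f →
      ∫⁻ ω, ∑' u : {u : List ℕ // u.length = n},
          (if 0 < xi R 1 u ω then
            ENNReal.ofReal (xi R 1 u ω ^ p₀) *
              f (fun m => Real.log (xi R 1 ((u : List ℕ).take ((m : ℕ) + 1)) ω) -
                Real.log (xi R 1 ((u : List ℕ).take (m : ℕ)) ω))
          else 0) ∂P
        = ∫⁻ y, f y ∂(Measure.pi fun _ : Fin n => nuTilde ν p₀) := by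
  have hprob := isProbabilityMeasure_nuTilde hmal.2.1
  refine ⟨hprob, fun n _ f hf => ?_⟩
  have hnonneg : ∀ᵐ ω ∂P, ∀ v i, 0 ≤ R v ω i := ae_all_iff.2 fun v =>
    ae_of_ae_map (hRmeas v).aemeasurable (by rw [hRdist v]; exact hν.mono fun s hs => hs.1)
  rw [lintegral_pi_nuTilde hf, ← lintegral_tsum_word_marks hRmeas hRindep hRdist
    (G := fun I σ => (∏ k, atomWeight p₀ (I k) (σ k)) * f fun k => Real.log (σ k (I k)))
    fun I => by fun_prop]
  exact lintegral_congr_ae (hnonneg.mono fun ω hω =>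
    tsum_congr fun u => cascade_summand_eq hω p₀ u.2 f)

/-- spine random walk / many-to-one formula. If the
Malthusian exponent `p₀` exists then `ν̃` is a probability measure and, for the
cascade started from `1`, for every `n ≥ 1` and measurable
`f : ℝⁿ → [0,∞]`,
`E[∑_{|u|=n, ξ_u>0} ξ_u^{p₀} f(ln ξ_{u|1} - ln ξ_{u|0}, …, ln ξ_{u|n} - ln ξ_{u|n-1})]
  = ∫ f dν̃^{⊗n}`:
the logarithm of the size along the tagged leaf is a random walk with step
distribution `ν̃`. -/
theorem stmt11 {Ω : Type*} [MeasurableSpace Ω] (P : Measure Ω) [IsProbabilityMeasure P]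
    (ν : Measure PMSeq) [IsProbabilityMeasure ν] (hν : ∀ᵐ s ∂ν, IsPointSeq s)
    (R : List ℕ → Ω → ℕ → ℝ) (hRmeas : ∀ u, Measurable (R u))
    (hRindep : iIndepFun R P)
    (hRdist : ∀ u, Measure.map (R u) P = ν)
    (p₀ : ℝ) (hmal : IsMalthusian ν p₀) :
    IsProbabilityMeasure (nuTilde ν p₀) ∧
    ∀ (n : ℕ), 1 ≤ n → ∀ f : (Fin n → ℝ) → ℝ≥0∞, Measurable f →
      ∫⁻ ω, ∑' u : {u : List ℕ // u.length = n},
          (if 0 < xi R 1 u ω then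
            ENNReal.ofReal (xi R 1 u ω ^ p₀) *
              f (fun m => Real.log (xi R 1 ((u : List ℕ).take ((m : ℕ) + 1)) ω) -
                Real.log (xi R 1 ((u : List ℕ).take (m : ℕ)) ω))
          else 0) ∂P
        = ∫⁻ y, f y ∂(Measure.pi fun _ : Fin n => nuTilde ν p₀) :=
  stmt11_general P ν hν R hRmeas hRindep hRdist p₀ hmal
end
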